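/- arXiv:1011.6478 — 2 statements merged into one kernel-verified Lean document; each statement's English description precedes it below -/
import Mathlib

section
/- Let Q : ℝ₊ → ℝ₊ be increasing, absolutely continuous, with Q(0)=0, such that Q'' is a non-positive σ-finite measure on (0,∞) and ∫_{0+} Q(y)|Q''|(dy) < ∞. Let X be a centered continuous Gaussian process on [0,T] with stationary increments and Var(X_t) = Q(t). Then E[∫₀^T ds₁ ∫₀^{s₁} (X_{s₁} − X_{s₂})² |Q''|(ds₁ − s₂)] = 2 ∫₀^T ds₁ ∫₀^{s₁} Q(s₂)|Q''|(ds₂) < ∞, and in particular ∫_{[0,T]²} (X_{s₁}−X_{s₂})² |Q''|(ds₂−s₁) ds₁ < ∞ almost surely. -/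
/-!
Everything is an iterated integral of a non-negative function, so by Tonelli the expectation
passes inside the double integral, where stationarity of the increments turns
`E (X_s - X_{s-u})²` into `Q u`. The inner integral over `u ∈ (0, s]` is at most
`∫_{(0,T]} Q dμ`, so the double integral is finite, and a non-negative random variable with
finite expectation is finite almost surely.
-/

open MeasureTheory ProbabilityTheory Set Function
open scoped ENNReal

section IteratedIoc

variable {α : Type*} [MeasurableSpace α] {μ ν : Measure ℝ}

theorem measurable_setLIntegral_Ioc [SFinite μ] {f : α → ℝ → ℝ≥0∞} (hf : Measurable (uncurry f))
    {a b : α → ℝ} (ha : Measurable a) (hb : Measurable b) :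
    Measurable fun x => ∫⁻ u in Ioc (a x) (b x), f x u ∂μ := by
  have hset : MeasurableSet {p : α × ℝ | a p.1 < p.2 ∧ p.2 ≤ b p.1} :=
    (measurableSet_lt (ha.comp measurable_fst) measurable_snd).inter
      (measurableSet_le measurable_snd (hb.comp measurable_fst))
  convert (hf.indicator hset).lintegral_prod_right' (ν := μ) using 2 with x
  rw [← lintegral_indicator measurableSet_Ioc]
  rfl

variable {F : α → ℝ → ℝ → ℝ≥0∞}

theorem measurable_uncurry_setLIntegral_Ioc [SFinite μ]
    (hF : Measurable fun p : α × ℝ × ℝ => F p.1 p.2.1 p.2.2) :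
    Measurable fun p : α × ℝ => ∫⁻ u in Ioc 0 p.2, F p.1 p.2 u ∂μ :=
  measurable_setLIntegral_Ioc (f := fun (p : α × ℝ) u => F p.1 p.2 u)
    (hF.comp (measurable_fst.fst.prodMk (measurable_fst.snd.prodMk measurable_snd)))
    measurable_const measurable_snd

theorem measurable_setLIntegral_Ioc_setLIntegral_Ioc [SFinite μ] [SFinite ν]
    (hF : Measurable fun p : α × ℝ × ℝ => F p.1 p.2.1 p.2.2) (T : ℝ) :
    Measurable fun x => ∫⁻ s in Ioc 0 T, ∫⁻ u in Ioc 0 s, F x s u ∂μ ∂ν :=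
  measurable_setLIntegral_Ioc (measurable_uncurry_setLIntegral_Ioc hF) measurable_const
    measurable_const

theorem lintegral_setLIntegral_Ioc_setLIntegral_Ioc_comm [SFinite μ] [SFinite ν]
    (P : Measure α) [SFinite P] (T : ℝ)
    (hF : Measurable fun p : α × ℝ × ℝ => F p.1 p.2.1 p.2.2) :
    ∫⁻ x, ∫⁻ s in Ioc 0 T, ∫⁻ u in Ioc 0 s, F x s u ∂μ ∂ν ∂P
      = ∫⁻ s in Ioc 0 T, ∫⁻ u in Ioc 0 s, ∫⁻ x, F x s u ∂P ∂μ ∂ν := by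
  rw [lintegral_lintegral_swap (measurable_uncurry_setLIntegral_Ioc hF).aemeasurable]
  refine lintegral_congr fun s => lintegral_lintegral_swap ?_
  exact (hF.comp (measurable_fst.prodMk (measurable_const.prodMk measurable_snd))).aemeasurable

theorem setLIntegral_Ioc_setLIntegral_Ioc_lt_top (ν : Measure ℝ) [IsFiniteMeasureOnCompacts ν]
    {T : ℝ} {g : ℝ → ℝ≥0∞} (hg : ∫⁻ u in Ioc 0 T, g u ∂μ < ⊤) :
    ∫⁻ s in Ioc 0 T, ∫⁻ u in Ioc 0 s, g u ∂μ ∂ν < ⊤ :=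
  calc ∫⁻ s in Ioc 0 T, ∫⁻ u in Ioc 0 s, g u ∂μ ∂ν
      ≤ ∫⁻ _ in Ioc 0 T, ∫⁻ u in Ioc 0 T, g u ∂μ ∂ν :=
        setLIntegral_mono' measurableSet_Ioc fun _ hs =>
          lintegral_mono_set (Ioc_subset_Ioc_right hs.2)
    _ = (∫⁻ u in Ioc 0 T, g u ∂μ) * ν (Ioc 0 T) := setLIntegral_const _ _
    _ < ⊤ := ENNReal.mul_lt_top hg measure_Ioc_lt_top

end IteratedIoc

theorem measurable_ofReal_sq_increment {Ω : Type*} [MeasurableSpace Ω] {X : ℝ → Ω → ℝ}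
    (hX : Measurable fun p : ℝ × Ω => X p.1 p.2) :
    Measurable fun p : Ω × ℝ × ℝ => ENNReal.ofReal ((X p.2.1 p.1 - X (p.2.1 - p.2.2) p.1) ^ 2) :=
  (((hX.comp (measurable_snd.fst.prodMk measurable_fst)).sub
    (hX.comp ((measurable_snd.fst.sub measurable_snd.snd).prodMk measurable_fst))).pow_const
    2).ennreal_ofReal

theorem stmt_13_general {Ω : Type*} [MeasurableSpace Ω] (P : Measure Ω) [IsProbabilityMeasure P]
    (T : ℝ) (Q : ℝ → ℝ) (μ : Measure ℝ) [SigmaFinite μ]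
    -- `∫_{0+} Q(y) |Q''|(dy) < ∞`
    (hint : ∫⁻ y in Set.Ioc (0:ℝ) T, ENNReal.ofReal (Q y) ∂μ < ⊤)
    (X : ℝ → Ω → ℝ)
    (hXmeas : Measurable fun p : ℝ × Ω => X p.1 p.2)
    -- stationary increments with variance `Q`
    (hstat : ∀ s t : ℝ, ∫⁻ ω, ENNReal.ofReal ((X s ω - X t ω) ^ 2) ∂P
      = ENNReal.ofReal (Q |s - t|)) :
    (∫⁻ ω, (2 * ∫⁻ s₁ in Set.Ioc (0:ℝ) T,
          ∫⁻ u in Set.Ioc (0:ℝ) s₁, ENNReal.ofReal ((X s₁ ω - X (s₁ - u) ω) ^ 2) ∂μ) ∂P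
        = 2 * ∫⁻ s₁ in Set.Ioc (0:ℝ) T,
            ∫⁻ u in Set.Ioc (0:ℝ) s₁, ENNReal.ofReal (Q u) ∂μ) ∧
    (2 * ∫⁻ s₁ in Set.Ioc (0:ℝ) T,
        ∫⁻ u in Set.Ioc (0:ℝ) s₁, ENNReal.ofReal (Q u) ∂μ < ⊤) ∧
    (∀ᵐ ω ∂P, ∫⁻ s₁ in Set.Ioc (0:ℝ) T,
        ∫⁻ u in Set.Ioc (0:ℝ) s₁, ENNReal.ofReal ((X s₁ ω - X (s₁ - u) ω) ^ 2) ∂μ < ⊤) := by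
  have hF : Measurable fun p : Ω × ℝ × ℝ =>
      ENNReal.ofReal ((X p.2.1 p.1 - X (p.2.1 - p.2.2) p.1) ^ 2) :=
    measurable_ofReal_sq_increment hXmeas
  have hmean : ∫⁻ ω, (∫⁻ s₁ in Ioc 0 T,
        ∫⁻ u in Ioc 0 s₁, ENNReal.ofReal ((X s₁ ω - X (s₁ - u) ω) ^ 2) ∂μ) ∂P
      = ∫⁻ s₁ in Ioc 0 T, ∫⁻ u in Ioc 0 s₁, ENNReal.ofReal (Q u) ∂μ := by
    rw [lintegral_setLIntegral_Ioc_setLIntegral_Ioc_comm P T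
      (F := fun ω s u => ENNReal.ofReal ((X s ω - X (s - u) ω) ^ 2)) hF]
    refine lintegral_congr fun s₁ => setLIntegral_congr_fun measurableSet_Ioc fun u hu => ?_
    rw [hstat, sub_sub_cancel, abs_of_pos hu.1]
  have hfin := setLIntegral_Ioc_setLIntegral_Ioc_lt_top volume hint
  refine ⟨?_, ENNReal.mul_lt_top ENNReal.ofNat_lt_top hfin, ?_⟩
  · rw [lintegral_const_mul' 2 _ ENNReal.ofNat_ne_top, hmean]
  · exact ae_lt_top (measurable_setLIntegral_Ioc_setLIntegral_Ioc
      (F := fun ω s u => ENNReal.ofReal ((X s ω - X (s - u) ω) ^ 2)) hF T) (hmean ▸ hfin.ne)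

theorem stmt_13 {Ω : Type*} [MeasurableSpace Ω] (P : Measure Ω) [IsProbabilityMeasure P]
    (T : ℝ) (hT : 0 < T) (Q q : ℝ → ℝ) (μ : Measure ℝ) [SigmaFinite μ]
    (hQc : Continuous Q) (hQ0 : Q 0 = 0) (hQmono : MonotoneOn Q (Set.Ici 0))
    -- `Q` is absolutely continuous with derivative `q` on `(0,∞)`
    (hq : ∀ t : ℝ, 0 < t → HasDerivAt Q (q t) t)
    -- `μ = |Q''|` is carried by `(0,∞)` and `Q'' = -μ` is non-positive
    (hμsupp : μ (Set.Iic 0) = 0)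
    (hQ'' : ∀ a b : ℝ, 0 < a → a ≤ b → q b - q a = -(μ (Set.Ioc a b)).toReal)
    (hμloc : ∀ a : ℝ, 0 < a → μ (Set.Ioi a) < ⊤)
    -- `∫_{0+} Q(y) |Q''|(dy) < ∞`
    (hint : ∫⁻ y in Set.Ioc (0:ℝ) T, ENNReal.ofReal (Q y) ∂μ < ⊤)
    (X : ℝ → Ω → ℝ)
    (hXmeas : Measurable fun p : ℝ × Ω => X p.1 p.2)
    (hXcont : ∀ ω, Continuous fun t => X t ω)
    (hX0 : ∀ᵐ ω ∂P, X 0 ω = 0)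
    (hGauss : ∀ s t : ℝ, ∃ v : NNReal,
      Measure.map (fun ω => X s ω - X t ω) P = gaussianReal 0 v)
    -- stationary increments with variance `Q`
    (hstat : ∀ s t : ℝ, ∫⁻ ω, ENNReal.ofReal ((X s ω - X t ω) ^ 2) ∂P
      = ENNReal.ofReal (Q |s - t|)) :
    (∫⁻ ω, (2 * ∫⁻ s₁ in Set.Ioc (0:ℝ) T,
          ∫⁻ u in Set.Ioc (0:ℝ) s₁, ENNReal.ofReal ((X s₁ ω - X (s₁ - u) ω) ^ 2) ∂μ) ∂P
        = 2 * ∫⁻ s₁ in Set.Ioc (0:ℝ) T,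
            ∫⁻ u in Set.Ioc (0:ℝ) s₁, ENNReal.ofReal (Q u) ∂μ) ∧
    (2 * ∫⁻ s₁ in Set.Ioc (0:ℝ) T,
        ∫⁻ u in Set.Ioc (0:ℝ) s₁, ENNReal.ofReal (Q u) ∂μ < ⊤) ∧
    (∀ᵐ ω ∂P, ∫⁻ s₁ in Set.Ioc (0:ℝ) T,
        ∫⁻ u in Set.Ioc (0:ℝ) s₁, ENNReal.ofReal ((X s₁ ω - X (s₁ - u) ω) ^ 2) ∂μ < ⊤) :=
  stmt_13_general P T Q μ hint X hXmeas hstat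
end

section
/- Let ν be a finite non-atomic measure on ℝ₊ and |μ| a σ-finite measure on ℝ₊² whose marginal measures are absolutely continuous with respect to ν. Define, for Borel f : ℝ₊ → ℝ, ‖f‖²_R = ∫ f² dν + ½ ∫∫ (f(s₁)−f(s₂))² d|μ|(s₁,s₂). If (f_n) is Cauchy for ‖·‖_R with f_n → f in L²(ν) and g_n(s₁,s₂) = f_n(s₁)−f_n(s₂) → g in L²(|μ|), then g(s₁,s₂) = f(s₁) − f(s₂) |μ|-almost everywhere; consequently the space L̃_R of Borel functions with ‖f‖_R < ∞ (modulo the natural equivalence) is complete. -/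
open MeasureTheory Filter
open scoped ENNReal

private lemma aux_sq_rpow_half (x : ℝ≥0∞) : (x ^ 2) ^ (1/2 : ℝ) = x := by
  rw [← ENNReal.rpow_natCast x 2, ← ENNReal.rpow_mul]; norm_num

private lemma aux_rpow_half_sq (x : ℝ≥0∞) : (x ^ (1/2 : ℝ)) ^ 2 = x := by
  rw [← ENNReal.rpow_natCast (x ^ (1/2:ℝ)) 2, ← ENNReal.rpow_mul]; norm_num

private lemma aux_ofReal_sq (x : ℝ) : ENNReal.ofReal (x ^ 2) = (‖x‖₊ : ℝ≥0∞) ^ (2:ℝ) := by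
  rw [ENNReal.rpow_two]
  rw [show ((‖x‖₊ : ℝ≥0∞)) = ENNReal.ofReal |x| by
    simp [Real.nnnorm_abs, ← Real.norm_eq_abs, enorm_eq_nnnorm]]
  rw [← ENNReal.ofReal_pow (abs_nonneg x), sq_abs]

private lemma aux_lint_sq_eq {α : Type*} [MeasurableSpace α] (m : Measure α) (f : α → ℝ) :
    ∫⁻ a, ENNReal.ofReal (f a ^ 2) ∂m = eLpNorm f 2 m ^ 2 := by
  rw [eLpNorm_eq_lintegral_rpow_enorm_toReal (two_ne_zero) ENNReal.ofNat_ne_top]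
  simp only [ENNReal.toReal_ofNat, aux_ofReal_sq, enorm_eq_nnnorm]
  rw [aux_rpow_half_sq]

private lemma aux_eLpNorm_eq_lint_half {α : Type*} [MeasurableSpace α] (m : Measure α)
    (f : α → ℝ) :
    eLpNorm f 2 m = (∫⁻ a, ENNReal.ofReal (f a ^ 2) ∂m) ^ (1/2:ℝ) := by
  rw [aux_lint_sq_eq, aux_sq_rpow_half]

private lemma aux_tendsto_eLpNorm_of_lint {α : Type*} [MeasurableSpace α] {m : Measure α}
    {f : ℕ → α → ℝ}
    (h : Tendsto (fun n => ∫⁻ a, ENNReal.ofReal (f n a ^ 2) ∂m) atTop (nhds 0)) :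
    Tendsto (fun n => eLpNorm (f n) 2 m) atTop (nhds 0) := by
  rw [ENNReal.tendsto_nhds_zero] at h ⊢
  intro ε hε
  filter_upwards [h (ε ^ 2) (ENNReal.pow_pos hε 2)] with n hn
  have h2 : eLpNorm (f n) 2 m ^ 2 ≤ ε ^ 2 := by rwa [← aux_lint_sq_eq]
  calc eLpNorm (f n) 2 m = (eLpNorm (f n) 2 m ^ 2) ^ (1/2:ℝ) := (aux_sq_rpow_half _).symm
    _ ≤ (ε ^ 2) ^ (1/2:ℝ) := ENNReal.rpow_le_rpow h2 (by norm_num)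
    _ = ε := aux_sq_rpow_half _

private lemma aux_tendsto_sq {u : ℕ → ℝ≥0∞} (hu : Tendsto u atTop (nhds 0)) :
    Tendsto (fun n => u n ^ 2) atTop (nhds 0) := by
  have := ((ENNReal.continuous_pow 2).tendsto 0).comp hu
  simpa [Function.comp_def] using this

private lemma aux_part1 (ν : Measure ℝ) (μ : Measure (ℝ × ℝ))
    (habs : ∀ A : Set ℝ, MeasurableSet A → ν A = 0 →
      μ (A ×ˢ Set.univ) = 0 ∧ μ (Set.univ ×ˢ A) = 0)
    (f : ℕ → ℝ → ℝ) (fl : ℝ → ℝ) (g : ℝ × ℝ → ℝ)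
    (hf : ∀ n, Measurable (f n)) (hfl : Measurable fl) (hg : Measurable g)
    (hν : Tendsto (fun n => ∫⁻ s, ENNReal.ofReal ((f n s - fl s) ^ 2) ∂ν) atTop (nhds 0))
    (hμ : Tendsto (fun n => ∫⁻ p, ENNReal.ofReal ((f n p.1 - f n p.2 - g p) ^ 2) ∂μ)
      atTop (nhds 0)) :
    ∀ᵐ p ∂μ, g p = fl p.1 - fl p.2 := by
  have hν' : TendstoInMeasure ν f atTop fl := by
    refine tendstoInMeasure_of_tendsto_eLpNorm (two_ne_zero)
      (fun n => (hf n).aestronglyMeasurable) hfl.aestronglyMeasurable ?_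
    exact aux_tendsto_eLpNorm_of_lint hν
  obtain ⟨ns, hns, hae⟩ := hν'.exists_seq_tendsto_ae
  have hμ' : TendstoInMeasure μ (fun i p => f (ns i) p.1 - f (ns i) p.2) atTop g := by
    refine tendstoInMeasure_of_tendsto_eLpNorm (two_ne_zero)
      (fun i => (((hf (ns i)).comp measurable_fst).sub
        ((hf (ns i)).comp measurable_snd)).aestronglyMeasurable)
      hg.aestronglyMeasurable ?_
    exact (aux_tendsto_eLpNorm_of_lint hμ).comp (hns.tendsto_atTop)
  obtain ⟨ms, hms, haeμ⟩ := hμ'.exists_seq_tendsto_ae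
  have hnull : ν {s | ¬ Tendsto (fun i => f (ns i) s) atTop (nhds (fl s))} = 0 := by
    rw [← ae_iff] at *; exact hae
  obtain ⟨N, hsub, hNmeas, hNnull⟩ := exists_measurable_superset_of_null hnull
  obtain ⟨h1, h2⟩ := habs N hNmeas hNnull
  have hfst : ∀ᵐ p ∂μ, p.1 ∉ N := by
    rw [ae_iff]
    refine measure_mono_null ?_ h1
    intro p hp
    simp only [Set.mem_setOf_eq, not_not] at hp
    exact ⟨hp, trivial⟩
  have hsnd : ∀ᵐ p ∂μ, p.2 ∉ N := by
    rw [ae_iff]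
    refine measure_mono_null ?_ h2
    intro p hp
    simp only [Set.mem_setOf_eq, not_not] at hp
    exact ⟨trivial, hp⟩
  filter_upwards [hfst, hsnd, haeμ] with p h1' h2' h3'
  have t1 : Tendsto (fun i => f (ns i) p.1) atTop (nhds (fl p.1)) := by
    by_contra hc; exact h1' (hsub hc)
  have t2 : Tendsto (fun i => f (ns i) p.2) atTop (nhds (fl p.2)) := by
    by_contra hc; exact h2' (hsub hc)
  exact tendsto_nhds_unique h3'
    ((t1.comp hms.tendsto_atTop).sub (t2.comp hms.tendsto_atTop))

private lemma aux_lp_limit {α : Type*} [MeasurableSpace α] (m : Measure α)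
    (u : ℕ → α → ℝ) (hu : ∀ n, MemLp (u n) 2 m)
    (hc : ∀ ε : ℝ≥0∞, 0 < ε → ∃ N, ∀ i ≥ N, ∀ j ≥ N,
      eLpNorm (fun a => u j a - u i a) 2 m < ε) :
    ∃ v : α → ℝ, Measurable v ∧
      Tendsto (fun n => eLpNorm (fun a => u n a - v a) 2 m) atTop (nhds 0) := by
  set F : ℕ → Lp ℝ 2 m := fun n => (hu n).toLp (u n) with hF
  have hcauchy : CauchySeq F := by
    rw [EMetric.cauchySeq_iff]
    intro ε hε
    obtain ⟨N, hN⟩ := hc ε hε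
    refine ⟨N, fun i hi j hj => ?_⟩
    have : edist (F i) (F j) = eLpNorm (fun a => u i a - u j a) 2 m := by
      rw [Lp.edist_def]
      exact eLpNorm_congr_ae (((hu i).coeFn_toLp).sub ((hu j).coeFn_toLp))
    rw [this]; exact hN j hj i hi
  obtain ⟨Fl, hFl⟩ := cauchySeq_tendsto_of_complete hcauchy
  set v : α → ℝ := (Lp.aestronglyMeasurable Fl).mk _ with hv
  refine ⟨v, (Lp.aestronglyMeasurable Fl).stronglyMeasurable_mk.measurable, ?_⟩
  rw [ENNReal.tendsto_nhds_zero]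
  intro ε hε
  obtain ⟨N, hN⟩ := EMetric.tendsto_atTop.mp hFl ε hε
  rw [eventually_atTop]
  refine ⟨N, fun n hn => ?_⟩
  have h1 : edist (F n) Fl = eLpNorm (fun a => u n a - v a) 2 m := by
    rw [Lp.edist_def]
    exact eLpNorm_congr_ae (((hu n).coeFn_toLp).sub ((Lp.aestronglyMeasurable Fl).ae_eq_mk))
  rw [← h1]
  exact (hN n hn).le

theorem stmt_17 (ν : Measure ℝ) [IsFiniteMeasure ν] [NullSingletonClass ν]
    (μ : Measure (ℝ × ℝ)) [SigmaFinite μ]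
    -- the marginal measures of `μ` are absolutely continuous w.r.t. `ν`
    (habs : ∀ A : Set ℝ, MeasurableSet A → ν A = 0 →
      μ (A ×ˢ Set.univ) = 0 ∧ μ (Set.univ ×ˢ A) = 0) :
    -- identification of the limit of the increments
    (∀ (f : ℕ → ℝ → ℝ) (fl : ℝ → ℝ) (g : ℝ × ℝ → ℝ),
      (∀ n, Measurable (f n)) → Measurable fl → Measurable g →
      -- `(f_n)` is Cauchy for `‖·‖_R`
      (∀ ε : ENNReal, 0 < ε → ∃ N : ℕ, ∀ m ≥ N, ∀ n ≥ N,
        (∫⁻ s, ENNReal.ofReal ((f n s - f m s) ^ 2) ∂ν)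
          + (1 / 2) * ∫⁻ p, ENNReal.ofReal
              ((f n p.1 - f m p.1 - (f n p.2 - f m p.2)) ^ 2) ∂μ < ε) →
      -- `f_n → fl` in `L²(ν)`
      Tendsto (fun n => ∫⁻ s, ENNReal.ofReal ((f n s - fl s) ^ 2) ∂ν) atTop (nhds 0) →
      -- `g_n(s₁,s₂) = f_n(s₁) - f_n(s₂) → g` in `L²(μ)`
      Tendsto (fun n => ∫⁻ p, ENNReal.ofReal ((f n p.1 - f n p.2 - g p) ^ 2) ∂μ)
        atTop (nhds 0) →
      ∀ᵐ p ∂μ, g p = fl p.1 - fl p.2) ∧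
    -- consequently, the space `L̃_R` is complete
    (∀ f : ℕ → ℝ → ℝ, (∀ n, Measurable (f n)) →
      (∀ ε : ENNReal, 0 < ε → ∃ N : ℕ, ∀ m ≥ N, ∀ n ≥ N,
        (∫⁻ s, ENNReal.ofReal ((f n s - f m s) ^ 2) ∂ν)
          + (1 / 2) * ∫⁻ p, ENNReal.ofReal
              ((f n p.1 - f m p.1 - (f n p.2 - f m p.2)) ^ 2) ∂μ < ε) →
      ∃ fl : ℝ → ℝ, Measurable fl ∧
        Tendsto (fun n =>
          (∫⁻ s, ENNReal.ofReal ((f n s - fl s) ^ 2) ∂ν)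
            + (1 / 2) * ∫⁻ p, ENNReal.ofReal
                ((f n p.1 - fl p.1 - (f n p.2 - fl p.2)) ^ 2) ∂μ) atTop (nhds 0)) := by
  constructor
  · intro f fl g hf hfl hg _ hν hμ
    exact aux_part1 ν μ habs f fl g hf hfl hg hν hμ
  · intro f hf hC
    -- split the Cauchy condition into its two components
    have hC1 : ∀ ε : ℝ≥0∞, 0 < ε → ∃ N : ℕ, ∀ m ≥ N, ∀ n ≥ N,
        (∫⁻ s, ENNReal.ofReal ((f n s - f m s) ^ 2) ∂ν) < ε ∧
        (∫⁻ p, ENNReal.ofReal ((f n p.1 - f m p.1 - (f n p.2 - f m p.2)) ^ 2) ∂μ)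
          < 2 * ε := by
      intro ε hε
      obtain ⟨N, hN⟩ := hC ε hε
      refine ⟨N, fun m hm n hn => ?_⟩
      have h := hN m hm n hn
      refine ⟨lt_of_le_of_lt (le_add_right le_rfl) h, ?_⟩
      have h2 : (1/2 : ℝ≥0∞) * (∫⁻ p, ENNReal.ofReal
          ((f n p.1 - f m p.1 - (f n p.2 - f m p.2)) ^ 2) ∂μ) < ε :=
        lt_of_le_of_lt (le_add_left le_rfl) h
      have := ENNReal.mul_lt_mul_right (a := 2) (by norm_num) (by norm_num) h2
      rwa [← mul_assoc, one_div, ENNReal.mul_inv_cancel two_ne_zero ENNReal.ofNat_ne_top,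
        one_mul] at this
    obtain ⟨N₀, hN₀⟩ := hC1 1 one_pos
    set h : ℕ → ℝ → ℝ := fun n s => f (n + N₀) s - f N₀ s with hh
    set G : ℕ → ℝ × ℝ → ℝ := fun n p => h n p.1 - h n p.2 with hG
    have hhm : ∀ n, Measurable (h n) := fun n => (hf _).sub (hf _)
    have hGm : ∀ n, Measurable (G n) := fun n =>
      ((hhm n).comp measurable_fst).sub ((hhm n).comp measurable_snd)
    have memh : ∀ n, MemLp (h n) 2 ν := by
      intro n
      refine ⟨(hhm n).aestronglyMeasurable, ?_⟩
      rw [aux_eLpNorm_eq_lint_half]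
      have := (hN₀ N₀ le_rfl (n + N₀) (Nat.le_add_left _ _)).1
      exact ENNReal.rpow_lt_top_of_nonneg (by norm_num) (this.trans ENNReal.one_lt_top).ne
    have memG : ∀ n, MemLp (G n) 2 μ := by
      intro n
      refine ⟨(hGm n).aestronglyMeasurable, ?_⟩
      rw [aux_eLpNorm_eq_lint_half]
      have := (hN₀ N₀ le_rfl (n + N₀) (Nat.le_add_left _ _)).2
      exact ENNReal.rpow_lt_top_of_nonneg (by norm_num)
        (this.trans (by norm_num : (2:ℝ≥0∞)*1 < ⊤)).ne
    -- Cauchy in L²(ν) in eLpNorm form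
    have hcν : ∀ ε : ℝ≥0∞, 0 < ε → ∃ N, ∀ i ≥ N, ∀ j ≥ N,
        eLpNorm (fun s => h j s - h i s) 2 ν < ε := by
      intro ε hε
      obtain ⟨N, hN⟩ := hC1 (ε ^ 2) (ENNReal.pow_pos hε 2)
      refine ⟨N, fun i hi j hj => ?_⟩
      have key := (hN (i + N₀) (le_trans hi (Nat.le_add_right _ _))
        (j + N₀) (le_trans hj (Nat.le_add_right _ _))).1
      have heq : (fun s => h j s - h i s) = fun s => f (j + N₀) s - f (i + N₀) s := by
        funext s; simp only [hh]; ring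
      rw [heq, aux_eLpNorm_eq_lint_half]
      calc (∫⁻ s, ENNReal.ofReal ((f (j+N₀) s - f (i+N₀) s) ^ 2) ∂ν) ^ (1/2:ℝ)
          < (ε ^ 2) ^ (1/2:ℝ) := ENNReal.rpow_lt_rpow key (by norm_num)
        _ = ε := aux_sq_rpow_half _
    -- Cauchy in L²(μ) in eLpNorm form
    have hcμ : ∀ ε : ℝ≥0∞, 0 < ε → ∃ N, ∀ i ≥ N, ∀ j ≥ N,
        eLpNorm (fun p => G j p - G i p) 2 μ < ε := by
      intro ε hε
      set ε' : ℝ≥0∞ := min ε 1 with hε'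
      have hε'pos : 0 < ε' := lt_min hε one_pos
      have hε'top : ε' ≠ ⊤ := (lt_of_le_of_lt (min_le_right _ _) ENNReal.one_lt_top).ne
      have hδpos : 0 < ε' ^ 2 / 2 :=
        ENNReal.div_pos (ENNReal.pow_pos hε'pos 2).ne' ENNReal.ofNat_ne_top
      obtain ⟨N, hN⟩ := hC1 (ε' ^ 2 / 2) hδpos
      refine ⟨N, fun i hi j hj => ?_⟩
      have key := (hN (i + N₀) (le_trans hi (Nat.le_add_right _ _))
        (j + N₀) (le_trans hj (Nat.le_add_right _ _))).2
      rw [ENNReal.mul_div_cancel two_ne_zero ENNReal.ofNat_ne_top] at key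
      have heq : (fun p : ℝ × ℝ => G j p - G i p) =
          fun p : ℝ × ℝ => f (j+N₀) p.1 - f (i+N₀) p.1 - (f (j+N₀) p.2 - f (i+N₀) p.2) := by
        funext p; simp only [hG, hh]; ring
      rw [heq, aux_eLpNorm_eq_lint_half]
      calc (∫⁻ p, ENNReal.ofReal
            ((f (j+N₀) p.1 - f (i+N₀) p.1 - (f (j+N₀) p.2 - f (i+N₀) p.2)) ^ 2) ∂μ) ^ (1/2:ℝ)
          < (ε' ^ 2) ^ (1/2:ℝ) := ENNReal.rpow_lt_rpow key (by norm_num)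
        _ = ε' := aux_sq_rpow_half _
        _ ≤ ε := min_le_left _ _
    obtain ⟨fl1, hfl1m, hfl1⟩ := aux_lp_limit ν h memh hcν
    obtain ⟨gl1, hgl1m, hgl1⟩ := aux_lp_limit μ G memG hcμ
    -- identify the limit of the increments
    have hνlim : Tendsto (fun n => ∫⁻ s, ENNReal.ofReal ((h n s - fl1 s) ^ 2) ∂ν)
        atTop (nhds 0) := by
      have : (fun n => ∫⁻ s, ENNReal.ofReal ((h n s - fl1 s) ^ 2) ∂ν)
          = fun n => eLpNorm (fun s => h n s - fl1 s) 2 ν ^ 2 := by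
        funext n; exact aux_lint_sq_eq ν _
      rw [this]
      exact aux_tendsto_sq hfl1
    have hμlim : Tendsto (fun n => ∫⁻ p, ENNReal.ofReal ((h n p.1 - h n p.2 - gl1 p) ^ 2) ∂μ)
        atTop (nhds 0) := by
      have : (fun n => ∫⁻ p, ENNReal.ofReal ((h n p.1 - h n p.2 - gl1 p) ^ 2) ∂μ)
          = fun n => eLpNorm (fun p => G n p - gl1 p) 2 μ ^ 2 := by
        funext n; exact aux_lint_sq_eq μ _
      rw [this]
      exact aux_tendsto_sq hgl1
    have hid : ∀ᵐ p ∂μ, gl1 p = fl1 p.1 - fl1 p.2 :=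
      aux_part1 ν μ habs h fl1 gl1 hhm hfl1m hgl1m hνlim hμlim
    -- the limit function
    refine ⟨fun s => fl1 s + f N₀ s, hfl1m.add (hf N₀), ?_⟩
    rw [← tendsto_add_atTop_iff_nat N₀]
    have hA : Tendsto (fun k =>
        ∫⁻ s, ENNReal.ofReal ((f (k + N₀) s - (fl1 s + f N₀ s)) ^ 2) ∂ν) atTop (nhds 0) := by
      have heq : ∀ k, (∫⁻ s, ENNReal.ofReal ((f (k + N₀) s - (fl1 s + f N₀ s)) ^ 2) ∂ν)
          = ∫⁻ s, ENNReal.ofReal ((h k s - fl1 s) ^ 2) ∂ν := by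
        intro k
        refine lintegral_congr fun s => ?_
        rw [show f (k + N₀) s - (fl1 s + f N₀ s) = h k s - fl1 s by simp only [hh]; ring]
      simp only [heq]
      exact hνlim
    have hB : Tendsto (fun k => ∫⁻ p, ENNReal.ofReal
        ((f (k + N₀) p.1 - (fl1 p.1 + f N₀ p.1) - (f (k + N₀) p.2 - (fl1 p.2 + f N₀ p.2))) ^ 2)
        ∂μ) atTop (nhds 0) := by
      have heq : ∀ k, (∫⁻ p, ENNReal.ofReal
          ((f (k + N₀) p.1 - (fl1 p.1 + f N₀ p.1)
            - (f (k + N₀) p.2 - (fl1 p.2 + f N₀ p.2))) ^ 2) ∂μ)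
          = ∫⁻ p, ENNReal.ofReal ((h k p.1 - h k p.2 - gl1 p) ^ 2) ∂μ := by
        intro k
        refine lintegral_congr_ae ?_
        filter_upwards [hid] with p hp
        rw [show f (k + N₀) p.1 - (fl1 p.1 + f N₀ p.1)
            - (f (k + N₀) p.2 - (fl1 p.2 + f N₀ p.2))
            = h k p.1 - h k p.2 - (fl1 p.1 - fl1 p.2) by simp only [hh]; ring, ← hp]
      simp only [heq]
      exact hμlim
    have h2 : Tendsto (fun k => (1/2 : ℝ≥0∞) * ∫⁻ p, ENNReal.ofReal
        ((f (k + N₀) p.1 - (fl1 p.1 + f N₀ p.1) - (f (k + N₀) p.2 - (fl1 p.2 + f N₀ p.2))) ^ 2)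
        ∂μ) atTop (nhds 0) := by
      have := ENNReal.Tendsto.const_mul hB (Or.inr (by norm_num : (1/2 : ℝ≥0∞) ≠ ⊤))
      simpa using this
    have := Tendsto.add hA h2
    simpa using this
end
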